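/- arXiv:2103.04229 — 2 statements merged into one kernel-verified Lean document; each statement's English description precedes it below -/
import Mathlib

section
/- For every integer n ≥ 1 the following two identities hold: (i) γ ∫_ℝ P_n(y)² w(y)/(y−t) dy = ∫_ℝ P_n(y)² (2y − t) w(y) dy, and (ii) γ ∫_ℝ P_n(y)P_{n−1}(y) w(y)/(y−t) dy = ∫_ℝ P_n(y)P_{n−1}(y)(2y − t) w(y) dy − n·h_{n−1}. -/
/-!
Both identities come from the Stein-type identity
`γ ∫ R w / (y - t) = ∫ R (2y - t) w - ∫ R' w`, valid for every polynomial `R`. It is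
obtained by integrating the derivative of `R(y) e^{-y² + ty} |y - t|^γ` over `(-∞, t]` and
over `(t, ∞)`, on each of which the jump factor `A + Bθ(y - t)` is constant; the boundary
terms vanish at `±∞` by Gaussian decay and at `t` because `γ > 0`. For `R = P_n²` the last
integral is `2 ∫ P_n' P_n w = 0` by orthogonality. For `R = P_n P_{n-1}` it is `n h_{n-1}`,
because `P_n' - n P_{n-1}` has degree `< n - 1` and `P_{n-1}'` has degree `< n`.
-/

open MeasureTheory Real Set Polynomial

noncomputable section

section Algebra

variable {R M : Type*} [CommRing R] [AddCommGroup M] [Module R M] {P : ℕ → R[X]}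

theorem map_eq_zero_of_degree_lt (hmonic : ∀ n, (P n).Monic)
    (hdeg : ∀ n, (P n).natDegree = n) (ℓ : R[X] →ₗ[R] M) {n : ℕ}
    (hℓ : ∀ m < n, ℓ (P m) = 0) {Q : R[X]} (hQ : Q.degree < n) : ℓ Q = 0 := by
  induction n generalizing Q with
  | zero =>
    have : Q = 0 := ext fun m => (degree_lt_iff_coeff_zero Q 0).1 hQ m m.zero_le
    rw [this, map_zero]
  | succ k ih =>
    have hlower : (Q - Q.coeff k • P k).degree < k := by
      rw [degree_lt_iff_coeff_zero]
      intro m hm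
      rcases hm.eq_or_lt with rfl | hm
      · have hlead := (hmonic k).coeff_natDegree
        rw [hdeg] at hlead
        simp [hlead]
      · rw [coeff_sub, coeff_smul, coeff_eq_zero_of_degree_lt (hQ.trans_le (by exact_mod_cast hm)),
          coeff_eq_zero_of_natDegree_lt (p := P k) (by rwa [hdeg]), smul_zero, sub_zero]
    calc ℓ Q = ℓ (Q - Q.coeff k • P k) + Q.coeff k • ℓ (P k) := by
          rw [map_sub, map_smul, sub_add_cancel]
      _ = 0 := by
          rw [ih (fun m hm => hℓ m (by omega)) hlower, hℓ k (by omega), smul_zero, add_zero]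

theorem degree_derivative_lt_of_natDegree_le {p : R[X]} {n : ℕ} (hp : p.natDegree ≤ n) :
    (derivative p).degree < n := by
  rw [degree_lt_iff_coeff_zero]
  intro m hm
  rw [coeff_derivative, coeff_eq_zero_of_natDegree_lt (by omega), zero_mul]

theorem degree_derivative_sub_nsmul_lt {p q : R[X]} {n : ℕ} (hp : p.Monic)
    (hpn : p.natDegree = n + 1) (hq : q.Monic) (hqn : q.natDegree = n) :
    (derivative p - (n + 1) • q).degree < n := by
  rw [degree_lt_iff_coeff_zero]
  intro m hm
  rcases hm.eq_or_lt with rfl | hm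
  · rw [coeff_sub, coeff_derivative, coeff_smul, ← hpn, hp.coeff_natDegree, ← hqn,
      hq.coeff_natDegree]
    simp [hpn, hqn]
  · rw [coeff_sub, coeff_derivative, coeff_smul, coeff_eq_zero_of_natDegree_lt (by omega),
      coeff_eq_zero_of_natDegree_lt (by omega)]
    simp

variable (hmonic : ∀ n, (P n).Monic) (hdeg : ∀ n, (P n).natDegree = n)
  {L : R[X] →ₗ[R] M} (horth : ∀ m n, m ≠ n → L (P m * P n) = 0)
include hmonic hdeg horth

theorem map_mul_eq_zero_of_degree_lt {n : ℕ} {Q : R[X]} (hQ : Q.degree < n) : L (Q * P n) = 0 :=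
  map_eq_zero_of_degree_lt hmonic hdeg (L ∘ₗ LinearMap.mulRight R (P n))
    (fun m hm => horth m n hm.ne) hQ

theorem map_derivative_sq_eq_zero (n : ℕ) : L (derivative (P n ^ 2)) = 0 := by
  rw [derivative_sq, mul_right_comm, mul_assoc, C_mul', map_smul,
    map_mul_eq_zero_of_degree_lt hmonic hdeg horth
      (degree_derivative_lt_of_natDegree_le (hdeg n).le), smul_zero]

theorem map_derivative_mul_eq (n : ℕ) :
    L (derivative (P (n + 1) * P n)) = (n + 1) • L (P n ^ 2) := by
  have hfirst := map_mul_eq_zero_of_degree_lt hmonic hdeg horth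
    (degree_derivative_sub_nsmul_lt (hmonic _) (hdeg _) (hmonic n) (hdeg n))
  have hsecond := map_mul_eq_zero_of_degree_lt hmonic hdeg horth (n := n + 1)
    (degree_derivative_lt_of_natDegree_le (hdeg n).le |>.trans_le (by exact_mod_cast n.le_succ))
  rw [sub_mul, map_sub, smul_mul_assoc, map_nsmul, sub_eq_zero] at hfirst
  rw [derivative_mul, map_add, hfirst, mul_comm (P (n + 1)), hsecond, add_zero, sq]

end Algebra

theorem integrable_abs_rpow_mul_exp_neg_mul_sq {b : ℝ} (hb : 0 < b) {s : ℝ} (hs : -1 < s) :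
    Integrable fun x : ℝ => |x| ^ s * exp (-b * x ^ 2) := by
  have hpos : IntegrableOn (fun x : ℝ => |x| ^ s * exp (-b * x ^ 2)) (Ioi 0) :=
    (integrableOn_rpow_mul_exp_neg_mul_sq hb hs).congr_fun
      (fun x hx => by rw [abs_of_pos hx]) measurableSet_Ioi
  have hneg : IntegrableOn (fun x : ℝ => |x| ^ s * exp (-b * x ^ 2)) (Iio 0) := by
    rw [← (Measure.measurePreserving_neg (volume : Measure ℝ)).integrableOn_comp_preimage
      (Homeomorph.neg ℝ).measurableEmbedding]
    simpa only [Function.comp_def, neg_preimage, neg_Iio, neg_zero, abs_neg, neg_sq] using hpos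
  rw [← integrableOn_univ, ← Iio_union_Ici (a := 0), integrableOn_union,
    integrableOn_Ici_iff_integrableOn_Ioi]
  exact ⟨hneg, hpos⟩

theorem integrable_one_add_sq_pow_mul_abs_rpow_mul_exp_neg_mul_sq {b : ℝ} (hb : 0 < b) (d : ℕ)
    {s : ℝ} (hs : -1 < s) :
    Integrable fun x : ℝ => (1 + x ^ 2) ^ d * (|x| ^ s * exp (-b * x ^ 2)) := by
  induction d generalizing s with
  | zero => simpa using integrable_abs_rpow_mul_exp_neg_mul_sq hb hs
  | succ d ih =>
    refine ((ih hs).add (ih (s := s + 2) (by linarith))).congr (ae_of_all _ fun x => ?_)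
    have hx2 : |x| ^ (s + 2) = |x| ^ s * x ^ 2 := by
      rw [rpow_add' (abs_nonneg x) (by linarith), ← sq_abs x, ← rpow_natCast]
      norm_num
    simp only [Pi.add_apply, hx2]
    ring

theorem abs_eval_le_mul_one_add_sq_pow (T : ℝ[X]) :
    ∃ K, ∀ x : ℝ, |T.eval x| ≤ K * (1 + x ^ 2) ^ T.natDegree := by
  refine ⟨∑ i ∈ Finset.range (T.natDegree + 1), |T.coeff i|, fun x => ?_⟩
  have habs : |x| ≤ 1 + x ^ 2 := by nlinarith [sq_nonneg (|x| - 1), sq_abs x]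
  rw [eval_eq_sum_range, Finset.sum_mul]
  refine (Finset.abs_sum_le_sum_abs _ _).trans (Finset.sum_le_sum fun i hi => ?_)
  rw [abs_mul, abs_pow]
  gcongr
  calc |x| ^ i ≤ (1 + x ^ 2) ^ i := pow_le_pow_left₀ (abs_nonneg x) habs i
    _ ≤ (1 + x ^ 2) ^ T.natDegree :=
      pow_le_pow_right₀ (by nlinarith) (Nat.lt_succ_iff.1 (Finset.mem_range.1 hi))

-- The weight of the theorem is `w = gaussAbsRpow t t γ * jumpFactor A B t`.
def gaussAbsRpow (c a γ y : ℝ) : ℝ := exp (-y ^ 2 + c * y) * |y - a| ^ γ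

def jumpFactor (A B a y : ℝ) : ℝ := A + B * if 0 < y - a then 1 else 0

variable {c a γ A B : ℝ}

theorem measurable_gaussAbsRpow : Measurable (gaussAbsRpow c a γ) := by
  unfold gaussAbsRpow; fun_prop

theorem continuous_gaussAbsRpow (hγ : 0 ≤ γ) : Continuous (gaussAbsRpow c a γ) :=
  (by fun_prop : Continuous fun y : ℝ => exp (-y ^ 2 + c * y)).mul
    ((by fun_prop : Continuous fun y : ℝ => |y - a|).rpow_const fun _ => Or.inr hγ)

theorem gaussAbsRpow_self (hγ : γ ≠ 0) : gaussAbsRpow c a γ a = 0 := by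
  simp [gaussAbsRpow, zero_rpow hγ]

theorem integrable_eval_mul_gaussAbsRpow (T : ℝ[X]) (hγ : -1 < γ) :
    Integrable fun y => T.eval y * gaussAbsRpow c a γ y := by
  set S := T.comp (X + C a)
  obtain ⟨K, hK⟩ := abs_eval_le_mul_one_add_sq_pow S
  set E := exp (c * a - a ^ 2 + (c - 2 * a) ^ 2 / 2)
  have hdom := ((integrable_one_add_sq_pow_mul_abs_rpow_mul_exp_neg_mul_sq one_half_pos
    S.natDegree hγ).const_mul (K * E)).comp_sub_right a
  refine hdom.mono' (T.continuous.measurable.mul measurable_gaussAbsRpow).aestronglyMeasurable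
    (ae_of_all _ fun y => ?_)
  have hT : |T.eval y| ≤ K * (1 + (y - a) ^ 2) ^ S.natDegree := by
    simpa [S] using hK (y - a)
  have hexp : exp (-y ^ 2 + c * y) ≤ E * exp (-(1 / 2) * (y - a) ^ 2) := by
    rw [← exp_add]
    exact exp_le_exp.2 (by nlinarith [sq_nonneg (y - a - (c - 2 * a))])
  rw [norm_mul, norm_eq_abs, gaussAbsRpow, norm_of_nonneg (by positivity)]
  calc |T.eval y| * (exp (-y ^ 2 + c * y) * |y - a| ^ γ)
      ≤ K * (1 + (y - a) ^ 2) ^ S.natDegree *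
          (E * exp (-(1 / 2) * (y - a) ^ 2) * |y - a| ^ γ) := by
        gcongr
        exact (abs_nonneg _).trans hT
    _ = _ := by ring

theorem integrable_eval_mul_gaussAbsRpow_div (T : ℝ[X]) (hγ : 0 < γ) :
    Integrable fun y => T.eval y * gaussAbsRpow c a γ y / (y - a) := by
  refine (integrable_eval_mul_gaussAbsRpow (c := c) (a := a) T
    (by linarith : -1 < γ - 1)).norm.mono'
    ((T.continuous.measurable.mul measurable_gaussAbsRpow).div
      (measurable_id.sub_const a)).aestronglyMeasurable (ae_of_all _ fun y => ?_)
  rcases eq_or_ne y a with rfl | hy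
  · simp only [sub_self, div_zero, norm_zero]
    exact norm_nonneg _
  · have hy' : |y - a| ≠ 0 := abs_ne_zero.2 (sub_ne_zero.2 hy)
    simp only [norm_div, norm_mul, gaussAbsRpow, norm_eq_abs, abs_exp, abs_abs,
      abs_rpow_of_nonneg (abs_nonneg _), rpow_sub_one hy']
    rw [mul_div_assoc, mul_div_assoc]

theorem sign_mul_abs_rpow_sub_one {x : ℝ} (hx : x ≠ 0) (γ : ℝ) :
    (SignType.sign x : ℝ) * |x| ^ (γ - 1) = |x| ^ γ / x := by
  rw [rpow_sub_one (abs_ne_zero.2 hx)]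
  rcases hx.lt_or_gt with hx | hx
  · rw [sign_neg hx, abs_of_neg hx, div_neg]
    simp
  · rw [sign_pos hx, abs_of_pos hx]
    simp

theorem hasDerivAt_gaussAbsRpow {y : ℝ} (hy : y ≠ a) :
    HasDerivAt (gaussAbsRpow c a γ)
      ((c - 2 * y) * gaussAbsRpow c a γ y + γ * gaussAbsRpow c a γ y / (y - a)) y := by
  have hya : y - a ≠ 0 := sub_ne_zero.2 hy
  have hexp : HasDerivAt (fun y => exp (-y ^ 2 + c * y)) (exp (-y ^ 2 + c * y) * (c - 2 * y)) y :=
    (((hasDerivAt_pow 2 y).neg.add ((hasDerivAt_id y).const_mul c)).congr_deriv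
      (by simp; ring)).exp
  have habs : HasDerivAt (fun y => |y - a|) (SignType.sign (y - a) : ℝ) y :=
    (hasDerivAt_abs hya).comp_sub_const y a
  refine (hexp.mul (habs.rpow_const (p := γ) (Or.inl (abs_ne_zero.2 hya)))).congr_deriv ?_
  rw [gaussAbsRpow, mul_right_comm _ γ, sign_mul_abs_rpow_sub_one hya]
  ring

theorem integral_Ioi_of_hasDerivAt_of_integrableOn {f f' : ℝ → ℝ} (hcont : ContinuousAt f a)
    (hderiv : ∀ x ∈ Ioi a, HasDerivAt f (f' x) x) (hf : IntegrableOn f (Ioi a))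
    (hf' : IntegrableOn f' (Ioi a)) : ∫ x in Ioi a, f' x = -f a := by
  rw [integral_Ioi_of_hasDerivAt_of_tendsto hcont.continuousWithinAt hderiv hf'
    (tendsto_zero_of_hasDerivAt_of_integrableOn_Ioi hderiv hf' hf), zero_sub]

theorem integral_Iic_of_hasDerivAt_of_integrableOn {f f' : ℝ → ℝ} (hcont : ContinuousAt f a)
    (hderiv : ∀ x ∈ Iio a, HasDerivAt f (f' x) x) (hf : IntegrableOn f (Iic a))
    (hf' : IntegrableOn f' (Iic a)) : ∫ x in Iic a, f' x = f a := by
  have hsub : Iic (a - 1) ⊆ Iic a := Iic_subset_Iic.2 (by linarith)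
  rw [integral_Iic_of_hasDerivAt_of_tendsto hcont.continuousWithinAt hderiv hf'
    (tendsto_zero_of_hasDerivAt_of_integrableOn_Iic (a := a - 1)
      (fun x hx => hderiv x (lt_of_le_of_lt (mem_Iic.1 hx) (by linarith))) (hf'.mono_set hsub)
      (hf.mono_set hsub)), sub_zero]

theorem measurable_jumpFactor : Measurable (jumpFactor A B a) :=
  measurable_const.add (measurable_const.mul
    (Measurable.ite (measurableSet_lt measurable_const (measurable_id.sub_const a))
      measurable_const measurable_const))

theorem MeasureTheory.Integrable.mul_jumpFactor {f : ℝ → ℝ} (hf : Integrable f) :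
    Integrable fun y => f y * jumpFactor A B a y := by
  refine hf.mul_bdd (c := |A| + |B|) measurable_jumpFactor.aestronglyMeasurable
    (ae_of_all _ fun y => ?_)
  rw [jumpFactor, norm_eq_abs]
  refine (abs_add_le _ _).trans (add_le_add le_rfl ?_)
  rw [abs_mul]
  exact mul_le_of_le_one_right (abs_nonneg B) (by split_ifs <;> simp)

theorem integral_mul_jumpFactor {f f' : ℝ → ℝ} (hcont : ContinuousAt f a)
    (hderiv : ∀ x ≠ a, HasDerivAt f (f' x) x) (hf : Integrable f) (hf' : Integrable f') :
    ∫ y, f' y * jumpFactor A B a y = -(B * f a) := by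
  have hJ := hf'.mul_jumpFactor (A := A) (B := B) (a := a)
  rw [← intervalIntegral.integral_Iic_add_Ioi hJ.integrableOn hJ.integrableOn]
  have hleft : ∫ y in Iic a, f' y * jumpFactor A B a y = A * f a := by
    rw [setIntegral_congr_fun measurableSet_Iic (g := fun y => A * f' y) fun y hy => by
        rw [jumpFactor, if_neg (not_lt.2 (sub_nonpos.2 (mem_Iic.1 hy))), mul_zero, add_zero,
          mul_comm],
      integral_const_mul, integral_Iic_of_hasDerivAt_of_integrableOn hcont
        (fun x hx => hderiv x hx.ne) hf.integrableOn hf'.integrableOn]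
  have hright : ∫ y in Ioi a, f' y * jumpFactor A B a y = -((A + B) * f a) := by
    rw [setIntegral_congr_fun measurableSet_Ioi (g := fun y => (A + B) * f' y) fun y hy => by
        rw [jumpFactor, if_pos (sub_pos.2 (mem_Ioi.1 hy)), mul_one, mul_comm],
      integral_const_mul, integral_Ioi_of_hasDerivAt_of_integrableOn hcont
        (fun x hx => hderiv x hx.ne') hf.integrableOn hf'.integrableOn, mul_neg]
  rw [hleft, hright]
  ring

section Weight

variable {w : ℝ → ℝ} (hγ : 0 < γ)
  (hw : ∀ y, w y = gaussAbsRpow c a γ y * jumpFactor A B a y)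
include hγ hw

theorem integrable_eval_mul_weight (T : ℝ[X]) : Integrable fun y => T.eval y * w y := by
  simp_rw [hw, ← mul_assoc]
  exact (integrable_eval_mul_gaussAbsRpow T (by linarith)).mul_jumpFactor

theorem integrable_eval_mul_weight_div (T : ℝ[X]) :
    Integrable fun y => T.eval y * w y / (y - a) := by
  refine ((integrable_eval_mul_gaussAbsRpow_div (c := c) (a := a) T hγ).mul_jumpFactor
    (A := A) (B := B) (a := a)).congr (ae_of_all _ fun y => ?_)
  simp only [hw]
  ring

theorem stein_identity (R : ℝ[X]) :
    γ * ∫ y, R.eval y * w y / (y - a) =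
      (∫ y, R.eval y * (2 * y - c) * w y) - ∫ y, (derivative R).eval y * w y := by
  set g := gaussAbsRpow c a γ
  set f' := fun y =>
    (derivative R + R * (C c - 2 * X)).eval y * g y + γ * (R.eval y * g y / (y - a))
  have hderiv : ∀ y ≠ a, HasDerivAt (fun y => R.eval y * g y) (f' y) y := fun y hy =>
    ((R.hasDerivAt y).mul (hasDerivAt_gaussAbsRpow hy)).congr_deriv (by simp [f']; ring)
  have hf' : Integrable f' := (integrable_eval_mul_gaussAbsRpow _ (by linarith)).add
    ((integrable_eval_mul_gaussAbsRpow_div R hγ).const_mul γ)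
  have hzero := integral_mul_jumpFactor (A := A) (B := B) (f := fun y => R.eval y * g y)
    (R.continuous.mul (continuous_gaussAbsRpow hγ.le)).continuousAt hderiv
    (integrable_eval_mul_gaussAbsRpow R (by linarith)) hf'
  rw [show g a = 0 from gaussAbsRpow_self hγ.ne', mul_zero, mul_zero, neg_zero] at hzero
  have h1 := integrable_eval_mul_weight hγ hw (derivative R)
  have h2 : Integrable fun y => R.eval y * (2 * y - c) * w y :=
    (integrable_eval_mul_weight hγ hw (R * (2 * X - C c))).congr
      (ae_of_all _ fun y => by simp)
  have h3 := (integrable_eval_mul_weight_div hγ hw R).const_mul γ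
  have hsplit : ∫ y, f' y * jumpFactor A B a y = (∫ y, (derivative R).eval y * w y) -
      (∫ y, R.eval y * (2 * y - c) * w y) + γ * ∫ y, R.eval y * w y / (y - a) := by
    have h12 : Integrable fun y => (derivative R).eval y * w y - R.eval y * (2 * y - c) * w y :=
      h1.sub h2
    rw [← integral_const_mul, ← integral_sub h1 h2, ← integral_add h12 h3]
    congr 1 with y
    simp only [f', hw, eval_add, eval_mul, eval_sub, eval_C, eval_X, eval_ofNat]
    ring
  linarith

end Weight

def momentFunctional (w : ℝ → ℝ) (hw : ∀ Q : ℝ[X], Integrable fun y => Q.eval y * w y) :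
    ℝ[X] →ₗ[ℝ] ℝ where
  toFun Q := ∫ y, Q.eval y * w y
  map_add' p q := by simp only [eval_add, add_mul]; exact integral_add (hw p) (hw q)
  map_smul' r p := by
    simp only [eval_smul, smul_eq_mul, mul_assoc, integral_const_mul, RingHom.id_apply]

end

theorem integral_identities_general
    (t γ A B : ℝ) (hγ : 0 < γ)
    (w : ℝ → ℝ)
    (hw : ∀ y : ℝ, w y =
      Real.exp (-y ^ 2 + t * y) * |y - t| ^ γ *
        (A + B * (if 0 < y - t then (1 : ℝ) else 0)))
    (P : ℕ → Polynomial ℝ)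
    (hmonic : ∀ n, (P n).Monic)
    (hdeg : ∀ n, (P n).natDegree = n)
    (horth : ∀ m n, m ≠ n →
      ∫ y : ℝ, (P m).eval y * (P n).eval y * w y = 0)
    (h : ℕ → ℝ)
    (hh : ∀ n, h n = ∫ y : ℝ, ((P n).eval y) ^ 2 * w y) :
    ∀ n : ℕ, 1 ≤ n →
      (γ * ∫ y : ℝ, ((P n).eval y) ^ 2 * w y / (y - t)
        = ∫ y : ℝ, ((P n).eval y) ^ 2 * (2 * y - t) * w y) ∧
      (γ * ∫ y : ℝ, (P n).eval y * (P (n - 1)).eval y * w y / (y - t)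
        = (∫ y : ℝ, (P n).eval y * (P (n - 1)).eval y * (2 * y - t) * w y)
          - n * h (n - 1)) := by
  intro n hn
  obtain ⟨k, rfl⟩ := Nat.exists_eq_add_of_le' hn
  let L := momentFunctional w (integrable_eval_mul_weight hγ hw)
  have hL (Q : ℝ[X]) : ∫ y, Q.eval y * w y = L Q := rfl
  have horthL (m n : ℕ) (hmn : m ≠ n) : L (P m * P n) = 0 := by
    simpa only [← hL, eval_mul] using horth m n hmn
  have hsq := stein_identity hγ hw (P (k + 1) ^ 2)
  have hmul := stein_identity hγ hw (P (k + 1) * P k)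
  rw [hL, map_derivative_sq_eq_zero hmonic hdeg horthL, sub_zero] at hsq
  rw [hL, map_derivative_mul_eq hmonic hdeg horthL, ← hL] at hmul
  simp only [eval_pow, eval_mul] at hsq hmul
  rw [Nat.add_sub_cancel, hh, ← nsmul_eq_mul]
  exact ⟨hsq, hmul⟩

/-- Two integral identities from integration by parts for the deformed Hermite weight with one jump, with v0'(y) = 2y - t. -/
theorem integral_identities
    (t γ A B : ℝ) (hγ : 0 < γ) (hA : 0 ≤ A) (hAB : 0 ≤ A + B)
    (hABpos : 0 < A ∨ 0 < A + B)
    (w : ℝ → ℝ)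
    (hw : ∀ y : ℝ, w y =
      Real.exp (-y ^ 2 + t * y) * |y - t| ^ γ *
        (A + B * (if 0 < y - t then (1 : ℝ) else 0)))
    (P : ℕ → Polynomial ℝ)
    (hmonic : ∀ n, (P n).Monic)
    (hdeg : ∀ n, (P n).natDegree = n)
    (horth : ∀ m n, m ≠ n →
      ∫ y : ℝ, (P m).eval y * (P n).eval y * w y = 0)
    (h : ℕ → ℝ)
    (hh : ∀ n, h n = ∫ y : ℝ, ((P n).eval y) ^ 2 * w y)
    (hhpos : ∀ n, 0 < h n) :
    ∀ n : ℕ, 1 ≤ n →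
      (γ * ∫ y : ℝ, ((P n).eval y) ^ 2 * w y / (y - t)
        = ∫ y : ℝ, ((P n).eval y) ^ 2 * (2 * y - t) * w y) ∧
      (γ * ∫ y : ℝ, (P n).eval y * (P (n - 1)).eval y * w y / (y - t)
        = (∫ y : ℝ, (P n).eval y * (P (n - 1)).eval y * (2 * y - t) * w y)
          - n * h (n - 1)) :=
  integral_identities_general t γ A B hγ w hw P hmonic hdeg horth h hh
end

section
/- For every integer n ≥ 1, the auxiliary quantities satisfy the product identity r_n(t)² − γ r_n(t) = β_n R_{n−1}(t) R_n(t). -/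
/-!
Write `P_k(y) = (y - t) Q_k(y) + P_k(t)` with `Q_k = P_k /ₘ (X - t)`, of degree `k - 1` and
monic for `k ≥ 1`. The functionals `L p = ∫ p w` and `M p = ∫ p w / (y - t)` satisfy
`M ((X - t) f) = L f`, hence `M (P_k g) = L (Q_k g) + P_k(t) M g`, and orthogonality evaluates
the `L`-terms: `R_n = γ P_n(t) M P_n / h_n`, while `r_n` has the two expressions
`γ P_{n-1}(t) M P_n / h_{n-1}` and `γ + γ P_n(t) M P_{n-1} / h_{n-1}`. Multiplying the first by
the second minus `γ` gives `β_n R_{n-1} R_n`. The only analytic input is that `p w` and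
`p w / (y - t)` are integrable for every polynomial `p`.
-/

open MeasureTheory Polynomial Set Real

namespace Polynomial

variable {K : Type*} [Field K]

theorem map_mul_eq_map_divByMonic_mul_add (L M : K[X] →ₗ[K] K) {t : K}
    (hLM : ∀ f, M ((X - C t) * f) = L f) (p g : K[X]) :
    M (p * g) = L (p /ₘ (X - C t) * g) + p.eval t * M g := by
  conv_lhs => rw [← modByMonic_add_div p (X - C t), modByMonic_X_sub_C_eq_C_eval]
  rw [add_mul, ← smul_eq_C_mul, map_add, map_smul, mul_assoc, hLM, add_comm, smul_eq_mul]

namespace Sequence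

variable (L : K[X] →ₗ[K] K) (S : Sequence K) (horth : ∀ i j, i ≠ j → L (S i * S j) = 0)
include horth

theorem map_mul_eq_zero_of_degree_lt {m : ℕ} {q : K[X]} (hq : q.degree < m) :
    L (q * S m) = 0 := by
  have hspan : degreeLT K m ≤ LinearMap.ker (L ∘ₗ LinearMap.mulRight K (S m)) := by
    rw [← S.span_degreeLT fun i _ => (leadingCoeff_ne_zero.mpr (S.ne_zero i)).isUnit,
      Submodule.span_le]
    rintro _ ⟨i, hi, rfl⟩
    exact horth i m (ne_of_lt hi)
  exact hspan (mem_degreeLT.mpr hq)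

theorem map_mul_eq_of_monic (hS : ∀ i, (S i).Monic) {n : ℕ} {q : K[X]} (hq : q.Monic)
    (hqn : q.natDegree = n) : L (q * S n) = L (S n * S n) := by
  have hdeg : q.degree = (S n).degree := by
    rw [degree_eq_natDegree hq.ne_zero, hqn, S.degree_eq]
  have hlt : (q - S n).degree < n := by
    simpa using
      degree_sub_lt_right hdeg (S.ne_zero n) (by rw [hq.leadingCoeff, (hS n).leadingCoeff])
  rw [← sub_eq_zero, ← map_sub, ← sub_mul]
  exact map_mul_eq_zero_of_degree_lt L S horth hlt

variable (M : K[X] →ₗ[K] K) {t : K} (hLM : ∀ f, M ((X - C t) * f) = L f)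
include hLM

theorem map_mul_eq_eval_mul_map (n : ℕ) {m : ℕ} (hnm : n ≤ m) :
    M (S n * S m) = (S n).eval t * M (S m) := by
  have hdeg : (S n /ₘ (X - C t)).degree < m := by
    refine (degree_divByMonic_lt _ _ (S.ne_zero n) ?_).trans_le ?_
    · simp
    · simpa using hnm
  rw [map_mul_eq_map_divByMonic_mul_add L M hLM, map_mul_eq_zero_of_degree_lt L S horth hdeg,
    zero_add]

theorem map_succ_mul_eq_add (hS : ∀ i, (S i).Monic) (n : ℕ) :
    M (S (n + 1) * S n) = L (S n * S n) + (S (n + 1)).eval t * M (S n) := by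
  have hmonic : (S (n + 1) /ₘ (X - C t)).Monic := by
    rw [Monic, leadingCoeff_divByMonic_X_sub_C _ (by simp [Nat.cast_add_one_ne_zero]),
      (hS _).leadingCoeff]
  have hdeg : (S (n + 1) /ₘ (X - C t)).natDegree = n := by
    simp [natDegree_divByMonic _ (monic_X_sub_C t)]
  rw [map_mul_eq_map_divByMonic_mul_add L M hLM, map_mul_eq_of_monic L S horth hS hmonic hdeg]

theorem sq_sub_mul_eq_div_mul_mul (hS : ∀ i, (S i).Monic) (γ : K) (n : ℕ)
    (hn : L (S n * S n) ≠ 0) (hn' : L (S (n + 1) * S (n + 1)) ≠ 0) :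
    (γ / L (S n * S n) * M (S (n + 1) * S n)) ^ 2
        - γ * (γ / L (S n * S n) * M (S (n + 1) * S n)) =
      L (S (n + 1) * S (n + 1)) / L (S n * S n) * (γ / L (S n * S n) * M (S n * S n)) *
        (γ / L (S (n + 1) * S (n + 1)) * M (S (n + 1) * S (n + 1))) := by
  have hr : M (S (n + 1) * S n) = (S n).eval t * M (S (n + 1)) := by
    rw [mul_comm, map_mul_eq_eval_mul_map L S horth M hLM n n.le_succ]
  have hr_sub : γ / L (S n * S n) * M (S (n + 1) * S n) - γ =
      γ / L (S n * S n) * ((S (n + 1)).eval t * M (S n)) := by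
    rw [map_succ_mul_eq_add L S horth M hLM hS]
    field_simp
    ring
  rw [map_mul_eq_eval_mul_map L S horth M hLM n le_rfl,
    map_mul_eq_eval_mul_map L S horth M hLM (n + 1) le_rfl, sq, ← mul_sub_right_distrib, hr_sub,
    hr]
  field_simp

end Sequence

end Polynomial

theorem integrable_eval_mul_exp_neg_sq (p : ℝ[X]) :
    Integrable fun x => p.eval x * exp (-x ^ 2) := by
  induction p using Polynomial.induction_on' with
  | add f g hf hg => simpa only [eval_add, add_mul] using! hf.add hg
  | monomial k a =>
    have hk := integrable_rpow_mul_exp_neg_mul_sq one_pos (neg_one_lt_zero.trans_le k.cast_nonneg)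
    simpa [mul_assoc] using hk.const_mul a

theorem integrable_eval_mul_exp_neg_sq_add_mul (t : ℝ) (p : ℝ[X]) :
    Integrable fun y => p.eval y * exp (-y ^ 2 + t * y) := by
  have hshift := ((integrable_eval_mul_exp_neg_sq (p.comp (X + C (t / 2)))).comp_sub_right
    (t / 2)).const_mul (exp (t ^ 2 / 4))
  refine hshift.congr (ae_of_all _ fun y => ?_)
  simp only [eval_comp, eval_add, eval_X, eval_C, sub_add_cancel]
  rw [mul_left_comm, ← exp_add]
  ring_nf

theorem integrableOn_abs_sub_rpow_Icc (t : ℝ) {s : ℝ} (hs : -1 < s) :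
    IntegrableOn (fun y => |y - t| ^ s) (Icc (t - 1) (t + 1)) := by
  have hpos : IntervalIntegrable (fun x => |x| ^ s) volume 0 1 :=
    (intervalIntegral.intervalIntegrable_rpow' hs).congr_ae <| by
      rw [Filter.EventuallyEq, ae_restrict_iff' measurableSet_uIoc]
      refine ae_of_all _ fun x hx => ?_
      rw [uIoc_of_le zero_le_one] at hx
      rw [abs_of_pos hx.1]
  have hneg : IntervalIntegrable (fun x => |x| ^ s) volume (-1) 0 := by
    simpa using (hpos.comp_mul_left (c := -1)).symm
  have hshift := (hneg.trans hpos).comp_sub_right t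
  rw [intervalIntegrable_iff_integrableOn_Icc_of_le (by linarith)] at hshift
  rwa [neg_add_eq_sub, add_comm 1] at hshift

theorem integrable_eval_mul_exp_mul_abs_sub_rpow (t : ℝ) {s : ℝ} (hs : -1 < s) (p : ℝ[X]) :
    Integrable fun y => p.eval y * exp (-y ^ 2 + t * y) * |y - t| ^ s := by
  have hp : Measurable fun y => p.eval y := p.continuous.measurable
  have hmeas : AEStronglyMeasurable (fun y => p.eval y * exp (-y ^ 2 + t * y) * |y - t| ^ s) :=
    (by fun_prop : Measurable _).aestronglyMeasurable
  rw [← integrableOn_univ, ← union_compl_self (Icc (t - 1) (t + 1))]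
  refine IntegrableOn.union ?_ ?_
  · obtain ⟨C, hC⟩ := isCompact_Icc.exists_bound_of_continuousOn
      (f := fun y => p.eval y * exp (-y ^ 2 + t * y)) (by fun_prop)
    refine ((integrableOn_abs_sub_rpow_Icc t hs).const_mul C).mono' hmeas.restrict ?_
    refine (ae_restrict_iff' measurableSet_Icc).mpr (ae_of_all _ fun y hy => ?_)
    have hnonneg : 0 ≤ |y - t| ^ s := rpow_nonneg (abs_nonneg _) s
    rw [norm_mul, Real.norm_of_nonneg hnonneg]
    exact mul_le_mul_of_nonneg_right (hC y hy) hnonneg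
  · set m := ⌈s⌉₊
    refine ((integrable_eval_mul_exp_neg_sq_add_mul t
      (p * (1 + (X - C t) ^ 2) ^ m)).norm.integrableOn).mono' hmeas.restrict ?_
    refine (ae_restrict_iff' measurableSet_Icc.compl).mpr (ae_of_all _ fun y hy => ?_)
    have h1 : 1 ≤ |y - t| := by
      rw [mem_compl_iff, mem_Icc] at hy
      contrapose! hy
      rw [abs_lt] at hy
      exact ⟨by linarith, by linarith⟩
    have hpow : |y - t| ^ s ≤ (1 + (y - t) ^ 2) ^ m := calc
      |y - t| ^ s ≤ |y - t| ^ m := by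
        simpa using rpow_le_rpow_of_exponent_le h1 (Nat.le_ceil s)
      _ ≤ (1 + (y - t) ^ 2) ^ m := by
        gcongr
        nlinarith [sq_abs (y - t)]
    simp only [norm_mul, eval_mul, eval_pow, eval_add, eval_one, eval_sub, eval_X, eval_C,
      Real.norm_eq_abs, abs_pow, abs_exp, abs_of_nonneg (rpow_nonneg (abs_nonneg _) s)]
    rw [abs_of_nonneg (by positivity : (0:ℝ) ≤ 1 + (y - t) ^ 2), mul_right_comm]
    gcongr

theorem integrable_eval_mul_of_abs_le {t s C : ℝ} (hs : -1 < s) {f : ℝ → ℝ}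
    (hf : AEStronglyMeasurable f)
    (hbound : ∀ y, |f y| ≤ C * (exp (-y ^ 2 + t * y) * |y - t| ^ s)) (p : ℝ[X]) :
    Integrable fun y => p.eval y * f y := by
  refine ((integrable_eval_mul_exp_mul_abs_sub_rpow t hs p).norm.const_mul C).mono'
    (p.continuous.aestronglyMeasurable.mul hf) (ae_of_all _ fun y => ?_)
  calc ‖p.eval y * f y‖ = |p.eval y| * |f y| := norm_mul _ _
    _ ≤ |p.eval y| * (C * (exp (-y ^ 2 + t * y) * |y - t| ^ s)) := by gcongr; exact hbound y
    _ = C * ‖p.eval y * exp (-y ^ 2 + t * y) * |y - t| ^ s‖ := by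
      rw [norm_mul, norm_mul, Real.norm_eq_abs, Real.norm_of_nonneg (exp_pos _).le,
        Real.norm_of_nonneg (rpow_nonneg (abs_nonneg _) s)]
      ring

section Weight

variable {t γ A B : ℝ} {w : ℝ → ℝ}
  (hw : ∀ y, w y = exp (-y ^ 2 + t * y) * |y - t| ^ γ * (A + B * (if 0 < y - t then 1 else 0)))
include hw

theorem measurable_weight : Measurable w := by
  have hθ : Measurable fun y : ℝ => if 0 < y - t then (1 : ℝ) else 0 :=
    Measurable.ite (measurableSet_lt measurable_const (by fun_prop)) measurable_const
      measurable_const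
  rw [funext hw]
  fun_prop

theorem abs_weight_le (y : ℝ) :
    |w y| ≤ (|A| + |B|) * (exp (-y ^ 2 + t * y) * |y - t| ^ γ) := by
  have hθ : |A + B * (if 0 < y - t then 1 else 0)| ≤ |A| + |B| := by
    split_ifs <;> simp [abs_add_le]
  rw [hw, abs_mul, abs_mul, abs_exp, abs_of_nonneg (rpow_nonneg (abs_nonneg _) γ), mul_comm]
  gcongr

theorem abs_weight_div_le (y : ℝ) :
    |w y / (y - t)| ≤ (|A| + |B|) * (exp (-y ^ 2 + t * y) * |y - t| ^ (γ - 1)) := by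
  rcases eq_or_ne y t with rfl | hyt
  · simp only [sub_self, div_zero, abs_zero]
    positivity
  have hpos : 0 < |y - t| := abs_pos.mpr (sub_ne_zero.mpr hyt)
  rw [abs_div, rpow_sub_one hpos.ne', mul_div_assoc', mul_div_assoc',
    div_le_div_iff_of_pos_right hpos]
  exact abs_weight_le hw y

end Weight

noncomputable def weightedIntegral (w : ℝ → ℝ)
    (hw : ∀ p : ℝ[X], Integrable fun y => p.eval y * w y) : ℝ[X] →ₗ[ℝ] ℝ where
  toFun p := ∫ y, p.eval y * w y
  map_add' p q := by simp only [eval_add, add_mul]; exact integral_add (hw p) (hw q)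
  map_smul' c p := by simp [mul_assoc, integral_const_mul]

theorem weightedIntegral_apply (w : ℝ → ℝ)
    (hw : ∀ p : ℝ[X], Integrable fun y => p.eval y * w y) (p : ℝ[X]) :
    weightedIntegral w hw p = ∫ y, p.eval y * w y := rfl

theorem weightedIntegral_div_X_sub_C_mul {w : ℝ → ℝ} {t : ℝ}
    (hw : ∀ p : ℝ[X], Integrable fun y => p.eval y * w y)
    (hw' : ∀ p : ℝ[X], Integrable fun y => p.eval y * (w y / (y - t))) (f : ℝ[X]) :
    weightedIntegral (fun y => w y / (y - t)) hw' ((X - C t) * f) = weightedIntegral w hw f := by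
  refine integral_congr_ae ((Measure.ae_ne volume t).mono fun y hyt => ?_)
  have : y - t ≠ 0 := sub_ne_zero.mpr hyt
  simp only [eval_mul, eval_sub, eval_X, eval_C]
  field_simp

theorem product_identity_general
    (t γ A B : ℝ) (hγ : 0 < γ)
    (w : ℝ → ℝ)
    (hw : ∀ y : ℝ, w y =
      Real.exp (-y ^ 2 + t * y) * |y - t| ^ γ *
        (A + B * (if 0 < y - t then (1 : ℝ) else 0)))
    (P : ℕ → Polynomial ℝ)
    (hmonic : ∀ n, (P n).Monic)
    (hdeg : ∀ n, (P n).natDegree = n)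
    (horth : ∀ m n, m ≠ n →
      ∫ y : ℝ, (P m).eval y * (P n).eval y * w y = 0)
    (h : ℕ → ℝ)
    (hh : ∀ n, h n = ∫ y : ℝ, ((P n).eval y) ^ 2 * w y)
    (hhpos : ∀ n, 0 < h n)
    (β : ℕ → ℝ)
    (hβ : ∀ n, 1 ≤ n → β n = h n / h (n - 1))
    (R : ℕ → ℝ)
    (hR : ∀ n, R n = γ / h n * ∫ y : ℝ, ((P n).eval y) ^ 2 * w y / (y - t))
    (r : ℕ → ℝ)
    (hr : ∀ n, 1 ≤ n → r n = γ / h (n - 1) *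
      ∫ y : ℝ, (P n).eval y * (P (n - 1)).eval y * w y / (y - t)) :
    ∀ n : ℕ, 1 ≤ n → (r n) ^ 2 - γ * r n = β n * R (n - 1) * R n := by
  have hwm := measurable_weight hw
  have hint := integrable_eval_mul_of_abs_le (by linarith) hwm.aestronglyMeasurable
    (abs_weight_le hw)
  have hint' := integrable_eval_mul_of_abs_le (by linarith)
    (hwm.div (by fun_prop)).aestronglyMeasurable (abs_weight_div_le hw)
  set L := weightedIntegral w hint
  set M := weightedIntegral (fun y => w y / (y - t)) hint'
  let S : Sequence ℝ := ⟨P, fun n => by rw [degree_eq_natDegree (hmonic n).ne_zero, hdeg]⟩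
  have hL : ∀ i j, L (P i * P j) = ∫ y, (P i).eval y * (P j).eval y * w y := fun i j => by
    simp [L, weightedIntegral_apply, mul_assoc]
  have hM : ∀ i j, M (P i * P j) = ∫ y, (P i).eval y * (P j).eval y * w y / (y - t) :=
    fun i j => by simp [M, weightedIntegral_apply, mul_assoc, mul_div_assoc]
  have hhL : ∀ n, h n = L (P n * P n) := fun n => by rw [hh, hL]; simp_rw [sq]
  have hRM : ∀ n, R n = γ / L (P n * P n) * M (P n * P n) := fun n => by
    rw [hR, hM, hhL]; simp_rw [sq]
  intro n hn
  obtain ⟨m, rfl⟩ := Nat.exists_eq_add_of_le' hn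
  rw [hβ _ hn, hr _ hn, ← hM, hRM, hRM, hhL, hhL, Nat.add_sub_cancel]
  exact Sequence.sq_sub_mul_eq_div_mul_mul L S (fun i j hij => (hL i j).trans (horth i j hij)) M
    (weightedIntegral_div_X_sub_C_mul hint hint') hmonic γ m
    (hhL m ▸ (hhpos m).ne') (hhL (m + 1) ▸ (hhpos (m + 1)).ne')

/-- For every n >= 1, r_n(t)^2 - gamma r_n(t) = beta_n R_{n-1}(t) R_n(t). -/
theorem product_identity
    (t γ A B : ℝ) (hγ : 0 < γ) (hA : 0 ≤ A) (hAB : 0 ≤ A + B)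
    (hABpos : 0 < A ∨ 0 < A + B)
    (w : ℝ → ℝ)
    (hw : ∀ y : ℝ, w y =
      Real.exp (-y ^ 2 + t * y) * |y - t| ^ γ *
        (A + B * (if 0 < y - t then (1 : ℝ) else 0)))
    (P : ℕ → Polynomial ℝ)
    (hmonic : ∀ n, (P n).Monic)
    (hdeg : ∀ n, (P n).natDegree = n)
    (horth : ∀ m n, m ≠ n →
      ∫ y : ℝ, (P m).eval y * (P n).eval y * w y = 0)
    (h : ℕ → ℝ)
    (hh : ∀ n, h n = ∫ y : ℝ, ((P n).eval y) ^ 2 * w y)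
    (hhpos : ∀ n, 0 < h n)
    (β : ℕ → ℝ)
    (hβ : ∀ n, 1 ≤ n → β n = h n / h (n - 1))
    (R : ℕ → ℝ)
    (hR : ∀ n, R n = γ / h n * ∫ y : ℝ, ((P n).eval y) ^ 2 * w y / (y - t))
    (r : ℕ → ℝ)
    (hr : ∀ n, 1 ≤ n → r n = γ / h (n - 1) *
      ∫ y : ℝ, (P n).eval y * (P (n - 1)).eval y * w y / (y - t)) :
    ∀ n : ℕ, 1 ≤ n → (r n) ^ 2 - γ * r n = β n * R (n - 1) * R n :=
  product_identity_general t γ A B hγ w hw P hmonic hdeg horth h hh hhpos β hβ R hR r hr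
end
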